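/- arXiv:2207.02599 — 2 statements merged into one kernel-verified Lean document; each statement's English description precedes it below -/
import Mathlib

section
/- Let b : [0,∞) → ℝ be the Laplace–Stieltjes transform of a probability distribution B on [0,∞), i.e. b(s) = ∫ e^{-st} dB(t), and let λ > 0. For every z ∈ (0,1), the equation y = z·b(λ(1−y)) has a unique solution y_z in the interval (0,1). -/
/-!
The function `g y = z * b (λ (1 - y)) - y` is continuous and convex on `[0, 1]`, because the
Laplace transform of a measure on `[0, ∞)` is an integral of the convex functions `s ↦ e^{-st}`.
Since `g 0 = z b(λ) > 0` and `g 1 = z - 1 < 0`, it has a zero in `(0, 1)`, and only one: if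
`u < v` were two zeros, comparing the secant slopes of the convex `g` over `[u, v]` and `[v, 1]`
would give `0 ≤ g 1 / (1 - v) < 0`.
-/

open MeasureTheory Set

lemma convexOn_integral {E α : Type*} [AddCommGroup E] [Module ℝ E] [MeasurableSpace α]
    {μ : Measure α} {S : Set E} {F : E → α → ℝ} (hS : Convex ℝ S)
    (hF : ∀ t, ConvexOn ℝ S (F · t)) (hint : ∀ s ∈ S, Integrable (F s) μ) :
    ConvexOn ℝ S fun s => ∫ t, F s t ∂μ := by
  refine ⟨hS, fun x hx y hy a b ha hb hab => ?_⟩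
  calc ∫ t, F (a • x + b • y) t ∂μ
      ≤ ∫ t, (a • F x t + b • F y t) ∂μ :=
        integral_mono (hint _ (hS hx hy ha hb hab))
          (((hint x hx).smul a).add ((hint y hy).smul b))
          fun t => (hF t).2 hx hy ha hb hab
    _ = a • ∫ t, F x t ∂μ + b • ∫ t, F y t ∂μ := by
        rw [← integral_smul, ← integral_smul]
        exact integral_add ((hint x hx).smul a) ((hint y hy).smul b)

theorem ConvexOn.existsUnique_eq_zero {g : ℝ → ℝ} {a c : ℝ} (hac : a ≤ c)
    (hconv : ConvexOn ℝ (Icc a c) g) (hcont : ContinuousOn g (Icc a c))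
    (ha : 0 < g a) (hc : g c < 0) : ∃! y, y ∈ Ioo a c ∧ g y = 0 := by
  obtain ⟨y, hy, hy0⟩ := intermediate_value_Ioo' hac hcont ⟨hc, ha⟩
  refine ⟨y, ⟨hy, hy0⟩, ?_⟩
  have not_lt_of_zeros :
      ∀ u v, u ∈ Ioo a c → v ∈ Ioo a c → g u = 0 → g v = 0 → ¬ u < v := by
    intro u v hu hv hu0 hv0 huv
    have hslope := hconv.slope_mono_adjacent (Ioo_subset_Icc_self hu)
      (right_mem_Icc.2 hac) huv hv.2
    simp only [hu0, hv0, sub_zero, zero_div] at hslope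
    exact (div_neg_of_neg_of_pos hc (sub_pos.2 hv.2)).not_ge hslope
  rintro w ⟨hw, hw0⟩
  exact le_antisymm (not_lt.1 (not_lt_of_zeros y w hy hw hy0 hw0))
    (not_lt.1 (not_lt_of_zeros w y hw hy hw0 hy0))

section Laplace

variable {B : Measure ℝ}

lemma ae_nonneg_of_measure_Iio_eq_zero (hB : B (Iio 0) = 0) : ∀ᵐ t ∂B, 0 ≤ t :=
  ae_iff.2 (measure_mono_null (fun _ ht => not_le.1 ht) hB)

lemma norm_exp_neg_mul_le_one {s t : ℝ} (hs : 0 ≤ s) (ht : 0 ≤ t) :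
    ‖Real.exp (-s * t)‖ ≤ 1 := by
  rw [Real.norm_of_nonneg (Real.exp_pos _).le, Real.exp_le_one_iff, neg_mul, neg_nonpos]
  exact mul_nonneg hs ht

lemma integrable_exp_neg_mul [IsFiniteMeasure B] (hB : B (Iio 0) = 0) {s : ℝ} (hs : 0 ≤ s) :
    Integrable (fun t => Real.exp (-s * t)) B :=
  Integrable.mono' (integrable_const 1) (by fun_prop)
    ((ae_nonneg_of_measure_Iio_eq_zero hB).mono fun _ ht => norm_exp_neg_mul_le_one hs ht)

lemma integral_exp_neg_mul_pos [IsFiniteMeasure B] [NeZero B] (hB : B (Iio 0) = 0) {s : ℝ}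
    (hs : 0 ≤ s) : 0 < ∫ t, Real.exp (-s * t) ∂B := by
  simpa [ProbabilityTheory.mgf] using
    ProbabilityTheory.mgf_pos' (X := id) (NeZero.ne B) (integrable_exp_neg_mul hB hs)

lemma convexOn_integral_exp_neg_mul [IsFiniteMeasure B] (hB : B (Iio 0) = 0) :
    ConvexOn ℝ (Ici 0) fun s => ∫ t, Real.exp (-s * t) ∂B :=
  convexOn_integral (convex_Ici 0)
    (fun t => ((convexOn_exp.comp_linearMap ((-t) • LinearMap.id)).subset (subset_univ _)
      (convex_Ici 0)).congr fun s _ => by simp [mul_comm])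
    fun _ hs => integrable_exp_neg_mul hB hs

lemma continuousOn_integral_exp_neg_mul [IsFiniteMeasure B] (hB : B (Iio 0) = 0) :
    ContinuousOn (fun s => ∫ t, Real.exp (-s * t) ∂B) (Ici 0) :=
  continuousOn_of_dominated (bound := fun _ => 1) (fun _ _ => by fun_prop)
    (fun _ hs => (ae_nonneg_of_measure_Iio_eq_zero hB).mono fun _ ht =>
      norm_exp_neg_mul_le_one hs ht)
    (integrable_const 1) (ae_of_all _ fun _ => by fun_prop)

end Laplace

/-- For every `z ∈ (0,1)`, the equation `y = z · b(λ(1−y))` has a unique solution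
in `(0,1)`, where `b` is the Laplace–Stieltjes transform of a probability
distribution `B` on `[0,∞)` and `λ > 0`. -/
theorem stmt_0 (B : Measure ℝ) [IsProbabilityMeasure B] (hBsupp : B (Set.Iio 0) = 0)
    (lam : ℝ) (hlam : 0 < lam)
    (b : ℝ → ℝ) (hb : ∀ s : ℝ, b s = ∫ t, Real.exp (-s * t) ∂B)
    (z : ℝ) (hz : z ∈ Set.Ioo (0 : ℝ) 1) :
    ∃! y : ℝ, y ∈ Set.Ioo (0 : ℝ) 1 ∧ y = z * b (lam * (1 - y)) := by
  have hmaps : MapsTo (fun y => lam * (1 - y)) (Icc 0 1) (Ici 0) := fun y hy =>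
    mul_nonneg hlam.le (sub_nonneg.2 hy.2)
  have hconv : ConvexOn ℝ (Icc 0 1) fun y => z * b (lam * (1 - y)) - y := by
    let φ : ℝ →ᵃ[ℝ] ℝ := AffineMap.lineMap lam 0
    have hφ : ∀ y, φ y = lam * (1 - y) := fun y => by
      simp [φ, AffineMap.lineMap_apply_ring]; ring
    have := (((convexOn_integral_exp_neg_mul hBsupp).comp_affineMap φ).subset
      (fun y hy => by simpa [hφ] using hmaps hy) (convex_Icc 0 1)).smul hz.1.le
    exact (this.sub (concaveOn_id (convex_Icc 0 1))).congr fun y _ => by simp [hφ, hb]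
  have hcont : ContinuousOn (fun y => z * b (lam * (1 - y)) - y) (Icc 0 1) := by
    have := (continuousOn_integral_exp_neg_mul hBsupp).comp (by fun_prop) hmaps
    exact ((this.const_smul z).sub continuousOn_id).congr fun y _ => by simp [hb]
  have hpos : 0 < z * b (lam * (1 - 0)) - 0 := by
    simpa [hb] using mul_pos hz.1 (integral_exp_neg_mul_pos hBsupp hlam.le)
  have hneg : z * b (lam * (1 - 1)) - 1 < 0 := by simpa [hb] using hz.2
  simpa only [sub_eq_zero, eq_comm (a := _ * _)] using
    hconv.existsUnique_eq_zero zero_le_one hcont hpos hneg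
end

section
/- Let η₁, η₂ be the first two moments of the number of customers served during a busy period of a stable M/G/1 queue (arrival rate λ, service distribution B with moments μ₁, μ₂, ρ = λμ₁ < 1). Then η₂ = (1/(1−ρ))·[1 + 2ρ/(1−ρ) + λ²μ₂/(1−ρ)²]. -/
/-!
In the variable `x = e^{-α}` the fixed-point equation reads `G(x) = x · b(λ(1 - G(x)))`, where
`G(x) = Σ xˢ N(s)`. Since `N` and `B` have finite second moments, dominated convergence gives
second-order expansions at the boundary:
`G(x) = 1 - η₁(1 - x) + ½(η₂ - η₁)(1 - x)² + o((1 - x)²)` as `x → 1⁻` and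
`b(θ) = 1 - μ₁θ + ½μ₂θ² + o(θ²)` as `θ → 0⁺`.
Substituting them into the fixed-point equation and comparing the coefficients of `1 - x` and
`(1 - x)²` gives `η₁(1 - ρ) = 1` and `½(η₂ - η₁)(1 - ρ) = η₁ρ + ½μ₂λ²η₁²`.
-/

open MeasureTheory Set Filter Topology Finset

theorem pow_sub_one_add_one_sub_mul (x : ℝ) (s : ℕ) :
    x ^ s - 1 + (1 - x) * s = (1 - x) ^ 2 * ∑ j ∈ range s, ∑ i ∈ range j, x ^ i := by
  induction s with
  | zero => simp
  | succ s ih =>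
    rw [sum_range_succ, mul_add, ← ih, pow_two, mul_assoc, mul_neg_geom_sum]
    push_cast
    ring

theorem sum_range_sum_range_pow_le {x : ℝ} (h0 : 0 ≤ x) (h1 : x ≤ 1) (s : ℕ) :
    ∑ j ∈ range s, ∑ i ∈ range j, x ^ i ≤ (s : ℝ) ^ 2 :=
  calc ∑ j ∈ range s, ∑ i ∈ range j, x ^ i
      ≤ ∑ j ∈ range s, ∑ i ∈ range j, (1 : ℝ) := by
        gcongr with j _ i _
        exact pow_le_one₀ h0 h1
    _ ≤ ∑ j ∈ range s, (s : ℝ) := by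
        gcongr with j hj
        simpa using (mem_range.1 hj).le
    _ = (s : ℝ) ^ 2 := by simp [sq]

theorem sum_range_natCast (s : ℕ) : ∑ j ∈ range s, (j : ℝ) = ((s : ℝ) ^ 2 - s) / 2 := by
  induction s with
  | zero => simp
  | succ s ih =>
    rw [sum_range_succ, ih]
    push_cast
    ring

section GeneratingFunction

variable {N : ℕ → ℝ}

theorem summable_pow_mul (hN : ∀ s, 0 ≤ N s) (hsum : Summable N) {x : ℝ} (h0 : 0 ≤ x)
    (h1 : x ≤ 1) : Summable fun s => x ^ s * N s :=
  hsum.of_nonneg_of_le (fun s => mul_nonneg (pow_nonneg h0 s) (hN s))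
    fun s => mul_le_of_le_one_left (hN s) (pow_le_one₀ h0 h1)

theorem tsum_pow_mul_le (hN0 : N 0 = 0) (hN : ∀ s, 0 ≤ N s) (hsum : Summable N) {x : ℝ}
    (h0 : 0 ≤ x) (h1 : x ≤ 1) : ∑' s, x ^ s * N s ≤ x * ∑' s, N s := by
  rw [← tsum_mul_left]
  refine (summable_pow_mul hN hsum h0 h1).tsum_le_tsum (fun s => ?_) (hsum.mul_left x)
  rcases s.eq_zero_or_pos with rfl | hs
  · simp [hN0]
  · exact mul_le_mul_of_nonneg_right (pow_le_of_le_one h0 h1 hs.ne') (hN s)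

theorem tendsto_tsum_pow_mul_sub_div_sq (hN : ∀ s, 0 ≤ N s)
    (h2 : Summable fun s : ℕ => (s : ℝ) ^ 2 * N s) :
    Tendsto (fun x : ℝ =>
        ((∑' s, x ^ s * N s) - ∑' s, N s + (1 - x) * ∑' s : ℕ, (s : ℝ) * N s) / (1 - x) ^ 2)
      (𝓝[<] 1) (𝓝 ((∑' s : ℕ, (s : ℝ) ^ 2 * N s - ∑' s : ℕ, (s : ℝ) * N s) / 2)) := by
  have h1 : Summable fun s : ℕ => (s : ℝ) * N s :=
    h2.of_nonneg_of_le (fun s => mul_nonneg s.cast_nonneg (hN s)) fun s => by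
      gcongr
      · exact hN s
      · exact_mod_cast Nat.le_self_pow two_ne_zero s
  have h0 : Summable N :=
    (summable_nat_add_iff 1).1 <| ((summable_nat_add_iff 1).2 h2).of_nonneg_of_le
      (fun s => hN _) fun s => le_mul_of_one_le_left (hN _) <| by
        push_cast
        exact one_le_pow₀ (le_add_of_nonneg_left s.cast_nonneg)
  set q : ℝ → ℕ → ℝ := fun x s => (∑ j ∈ range s, ∑ i ∈ range j, x ^ i) * N s
  have hq : ∀ x ∈ Ico (0 : ℝ) 1, ∀ s, ‖q x s‖ ≤ (s : ℝ) ^ 2 * N s := by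
    intro x hx s
    have hsum_nonneg := sum_nonneg fun j (_ : j ∈ range s) =>
      sum_nonneg fun i (_ : i ∈ range j) => pow_nonneg hx.1 i
    rw [Real.norm_of_nonneg (mul_nonneg hsum_nonneg (hN s))]
    exact mul_le_mul_of_nonneg_right (sum_range_sum_range_pow_le hx.1 hx.2.le s) (hN s)
  have hq1 : ∑' s, q 1 s = (∑' s : ℕ, (s : ℝ) ^ 2 * N s - ∑' s : ℕ, (s : ℝ) * N s) / 2 := by
    rw [← h2.tsum_sub h1, ← tsum_div_const]
    refine tsum_congr fun s => ?_
    simp only [q, one_pow, sum_const, card_range, nsmul_eq_mul, mul_one]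
    rw [sum_range_natCast]
    ring
  have hlim : Tendsto (fun x => ∑' s, q x s) (𝓝[<] 1) (𝓝 (∑' s, q 1 s)) :=
    tendsto_tsum_of_dominated_convergence h2
      (fun s => ((by fun_prop : Continuous (q · s)).tendsto 1).mono_left nhdsWithin_le_nhds)
      (eventually_of_mem (Ico_mem_nhdsLT zero_lt_one) hq)
  rw [hq1] at hlim
  refine hlim.congr' (eventually_of_mem (Ico_mem_nhdsLT zero_lt_one) fun x hx => ?_)
  have hxN := summable_pow_mul hN h0 hx.1 hx.2.le
  rw [eq_div_iff (pow_ne_zero 2 (sub_ne_zero.2 hx.2.ne')), ← tsum_mul_right,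
    ← hxN.tsum_sub h0, ← tsum_mul_left, ← (hxN.sub h0).tsum_add (h1.mul_left _)]
  refine tsum_congr fun s => ?_
  linear_combination -N s * pow_sub_one_add_one_sub_mul x s

end GeneratingFunction

theorem exp_neg_sub_one_add_le_sq {y : ℝ} (hy : 0 ≤ y) : Real.exp (-y) - 1 + y ≤ y ^ 2 := by
  have h : Real.exp (-y) * Real.exp y = 1 := by
    rw [← Real.exp_add, neg_add_cancel, Real.exp_zero]
  nlinarith [Real.add_one_le_exp y, Real.exp_pos (-y), pow_nonneg hy 3]

theorem abs_exp_neg_sub_quadratic_le {y : ℝ} (hy : |y| ≤ 1) :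
    |Real.exp (-y) - (1 - y + y ^ 2 / 2)| ≤ |y| ^ 3 := by
  have h := Real.exp_bound (x := -y) (by rwa [abs_neg]) (n := 3) (by norm_num)
  norm_num [sum_range_succ, Nat.factorial, abs_neg] at h
  calc |Real.exp (-y) - (1 - y + y ^ 2 / 2)| ≤ |y| ^ 3 * (2 / 9) := by
        convert h using 2
        ring
    _ ≤ |y| ^ 3 := by nlinarith [pow_nonneg (abs_nonneg y) 3]

theorem tendsto_exp_neg_mul_sub_div_sq (t : ℝ) :
    Tendsto (fun θ : ℝ => (Real.exp (-(θ * t)) - 1 + θ * t) / θ ^ 2) (𝓝[≠] 0)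
      (𝓝 (t ^ 2 / 2)) := by
  rw [tendsto_iff_norm_sub_tendsto_zero]
  have hsmall : ∀ᶠ θ in 𝓝[≠] (0 : ℝ), |θ * t| ≤ 1 :=
    nhdsWithin_le_nhds <| Tendsto.eventually_le_const zero_lt_one <|
      (continuous_id.mul continuous_const).abs.tendsto' 0 0 (by simp)
  have hbound : Tendsto (fun θ : ℝ => |θ| * |t| ^ 3) (𝓝[≠] 0) (𝓝 0) :=
    ((continuous_abs.mul continuous_const).tendsto' 0 0 (by simp)).mono_left
      nhdsWithin_le_nhds
  refine squeeze_zero' (.of_forall fun _ => norm_nonneg _) ?_ hbound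
  filter_upwards [hsmall, self_mem_nhdsWithin] with θ hθt (hθ : θ ≠ 0)
  have hθ2 : 0 < θ ^ 2 := by positivity
  have hsub : (Real.exp (-(θ * t)) - 1 + θ * t) / θ ^ 2 - t ^ 2 / 2
      = (Real.exp (-(θ * t)) - (1 - θ * t + (θ * t) ^ 2 / 2)) / θ ^ 2 := by
    field_simp
    ring
  rw [hsub, Real.norm_eq_abs, abs_div, abs_of_pos hθ2, div_le_iff₀ hθ2]
  calc _ ≤ |θ * t| ^ 3 := abs_exp_neg_sub_quadratic_le hθt
    _ = |θ| * |t| ^ 3 * θ ^ 2 := by rw [abs_mul, mul_pow, ← sq_abs θ]; ring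

theorem tendsto_integral_exp_neg_mul_sub_div_sq (B : Measure ℝ) [IsProbabilityMeasure B]
    (hB : ∀ᵐ t ∂B, 0 ≤ t) (h1 : Integrable (fun t : ℝ => t) B)
    (h2 : Integrable (fun t : ℝ => t ^ 2) B) :
    Tendsto (fun θ : ℝ => ((∫ t, Real.exp (-θ * t) ∂B) - 1 + θ * ∫ t, t ∂B) / θ ^ 2)
      (𝓝[>] 0) (𝓝 ((∫ t, t ^ 2 ∂B) / 2)) := by
  have hdct : Tendsto (fun θ : ℝ => ∫ t, (Real.exp (-(θ * t)) - 1 + θ * t) / θ ^ 2 ∂B)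
      (𝓝[>] 0) (𝓝 (∫ t, t ^ 2 / 2 ∂B)) := by
    refine tendsto_integral_filter_of_dominated_convergence (fun t => t ^ 2)
      (.of_forall fun θ => by fun_prop) ?_ h2
      (hB.mono fun t _ => (tendsto_exp_neg_mul_sub_div_sq t).mono_left (nhdsGT_le_nhdsNE 0))
    filter_upwards [self_mem_nhdsWithin] with θ (hθ : 0 < θ)
    filter_upwards [hB] with t ht
    have hy := mul_nonneg hθ.le ht
    rw [Real.norm_of_nonneg (div_nonneg (by linarith [Real.add_one_le_exp (-(θ * t))])
      (sq_nonneg θ)), div_le_iff₀ (by positivity)]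
    linarith [exp_neg_sub_one_add_le_sq hy, show (θ * t) ^ 2 = t ^ 2 * θ ^ 2 by ring]
  rw [integral_div] at hdct
  refine hdct.congr' ?_
  filter_upwards [self_mem_nhdsWithin] with θ (hθ : 0 < θ)
  have hexp : Integrable (fun t => Real.exp (-θ * t)) B := by
    refine (integrable_const 1).mono' (by fun_prop) (hB.mono fun t ht => ?_)
    rw [Real.norm_eq_abs, abs_of_pos (Real.exp_pos _), Real.exp_le_one_iff]
    nlinarith
  have hexp1 : Integrable (fun t => Real.exp (-θ * t) - 1) B := hexp.sub (integrable_const 1)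
  simp_rw [← neg_mul]
  rw [integral_div, integral_add hexp1 (h1.const_mul θ), integral_sub hexp (integrable_const 1),
    integral_const_mul]
  simp

section Expansion

variable {ι : Type*} {l : Filter ι} {E U R : ι → ℝ} {η σ : ℝ}

theorem tendsto_div_of_tendsto_sub_div_sq (hE : Tendsto E l (𝓝 0)) (hE0 : ∀ᶠ i in l, E i ≠ 0)
    (hU : Tendsto (fun i => (E i * η - U i) / E i ^ 2) l (𝓝 σ)) :
    Tendsto (fun i => U i / E i) l (𝓝 η) := by
  have h := tendsto_const_nhds (x := η) |>.sub (hE.mul hU)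
  rw [zero_mul, sub_zero] at h
  refine h.congr' (hE0.mono fun i hi => ?_)
  field_simp
  ring

/-- Read with `U = ηE - σE² + o(E²)` and `R = cE² + o(E²)` as `E → 0`: matching the terms of
order `E` and `E²` in `1 - U = (1 - E)(1 - ρU + R)`. -/
theorem expansion_coeffs_of_fixed_point [l.NeBot] {c ρ : ℝ} (hE : Tendsto E l (𝓝 0))
    (hE0 : ∀ᶠ i in l, E i ≠ 0) (hU : Tendsto (fun i => (E i * η - U i) / E i ^ 2) l (𝓝 σ))
    (hR : Tendsto (fun i => R i / E i ^ 2) l (𝓝 c))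
    (hfix : ∀ᶠ i in l, 1 - U i = (1 - E i) * (1 - ρ * U i + R i)) :
    η * (1 - ρ) = 1 ∧ σ * (1 - ρ) = η * ρ + c := by
  have hD : Tendsto (fun i => 1 - ρ + E i * ρ) l (𝓝 (1 - ρ)) := by
    simpa using tendsto_const_nhds (x := 1 - ρ) |>.add (hE.mul_const ρ)
  have hRE : Tendsto (fun i => R i / E i) l (𝓝 0) := by
    simpa using (hR.mul hE).congr' (hE0.mono fun i hi => by field_simp)
  have hR0 : Tendsto R l (𝓝 0) := by
    simpa using (hRE.mul hE).congr' (hE0.mono fun i hi => by field_simp)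
  have hfix' : ∀ᶠ i in l, E i ≠ 0 ∧ U i * (1 - ρ + E i * ρ) = E i + E i * R i - R i :=
    (hE0.and hfix).mono fun i ⟨hi, h⟩ => ⟨hi, by linear_combination -h⟩
  have h1 : η * (1 - ρ) = 1 := by
    refine tendsto_nhds_unique ((tendsto_div_of_tendsto_sub_div_sq hE hE0 hU).mul hD) ?_
    simpa using (tendsto_const_nhds (x := (1 : ℝ)) |>.add hR0 |>.sub hRE).congr'
      (hfix'.mono fun i ⟨hi, h⟩ => by field_simp; linear_combination -h)
  refine ⟨h1, tendsto_nhds_unique (hU.mul hD) ?_⟩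
  simpa using (tendsto_const_nhds (x := η * ρ) |>.sub hRE |>.add hR).congr'
    (hfix'.mono fun i ⟨hi, h⟩ => by field_simp; linear_combination h - E i * h1)

end Expansion

theorem tsum_pow_mul_eq_mul_of_tsum_exp {N : ℕ → ℝ} {F : ℝ → ℝ}
    (hfix : ∀ α : ℝ, 0 < α →
      ∑' s : ℕ, Real.exp (-α * s) * N s = Real.exp (-α) * F (∑' s : ℕ, Real.exp (-α * s) * N s))
    {x : ℝ} (hx : x ∈ Ioo (0 : ℝ) 1) : ∑' s : ℕ, x ^ s * N s = x * F (∑' s : ℕ, x ^ s * N s) := by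
  have hpow (s : ℕ) : Real.exp (Real.log x * s) = x ^ s := by
    rw [← Real.rpow_def_of_pos hx.1, Real.rpow_natCast]
  simpa only [neg_neg, hpow, Real.exp_log hx.1] using
    hfix (-Real.log x) (neg_pos.2 (Real.log_neg hx.1 hx.2))

theorem moment_eqs_of_takacs_eq {G b : ℝ → ℝ} {lam η₁ σ μ₁ μ₂ : ℝ} (hlam : 0 < lam)
    (hG : Tendsto (fun x => (G x - 1 + (1 - x) * η₁) / (1 - x) ^ 2) (𝓝[<] 1) (𝓝 σ))
    (hb : Tendsto (fun θ => (b θ - 1 + θ * μ₁) / θ ^ 2) (𝓝[>] 0) (𝓝 (μ₂ / 2)))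
    (hG1 : ∀ x ∈ Ioo (0 : ℝ) 1, G x < 1)
    (hfix : ∀ x ∈ Ioo (0 : ℝ) 1, G x = x * b (lam * (1 - G x))) :
    η₁ * (1 - lam * μ₁) = 1 ∧ σ * (1 - lam * μ₁) = η₁ * (lam * μ₁) + μ₂ / 2 * (lam * η₁) ^ 2 := by
  have hIoo : ∀ᶠ x in 𝓝[<] (1 : ℝ), x ∈ Ioo (0 : ℝ) 1 := Ioo_mem_nhdsLT zero_lt_one
  have hE : Tendsto (fun x : ℝ => 1 - x) (𝓝[<] 1) (𝓝 0) :=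
    ((continuous_const.sub continuous_id).tendsto' 1 0 (sub_self 1)).mono_left
      nhdsWithin_le_nhds
  have hE0 : ∀ᶠ x in 𝓝[<] (1 : ℝ), 1 - x ≠ 0 := hIoo.mono fun x hx => sub_ne_zero.2 hx.2.ne'
  have hU : Tendsto (fun x => ((1 - x) * η₁ - (1 - G x)) / (1 - x) ^ 2) (𝓝[<] 1) (𝓝 σ) :=
    hG.congr fun x => by ring
  have hUE := tendsto_div_of_tendsto_sub_div_sq hE hE0 hU
  have hUpos : ∀ᶠ x in 𝓝[<] (1 : ℝ), 0 < 1 - G x := hIoo.mono fun x hx => sub_pos.2 (hG1 x hx)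
  have hθ : Tendsto (fun x => lam * (1 - G x)) (𝓝[<] 1) (𝓝[>] 0) := by
    refine tendsto_nhdsWithin_iff.2 ⟨?_, hUpos.mono fun x hx => mul_pos hlam hx⟩
    simpa using ((hE.mul hUE).const_mul lam).congr' (hE0.mono fun x hx => by field_simp)
  have hR := (hb.comp hθ).mul ((hUE.const_mul lam).pow 2)
  refine expansion_coeffs_of_fixed_point (E := fun x => 1 - x) (U := fun x => 1 - G x)
    (R := fun x => b (lam * (1 - G x)) - 1 + lam * (1 - G x) * μ₁) hE hE0 hU
    (hR.congr' ((hE0.and hUpos).mono fun x ⟨hx, hUx⟩ => by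
      simp only [Function.comp_apply]
      field_simp)) (hIoo.mono fun x hx => ?_)
  simp only [sub_sub_cancel]
  linear_combination hfix x hx

/-- The second moment `η₂ = Σ_{s≥1} s²·N(s)` of the number of customers served during a
busy period of a stable M/G/1 queue satisfies
`η₂ = (1/(1−ρ))·[1 + 2ρ/(1−ρ) + λ²μ₂/(1−ρ)²]`, where the Laplace transform
`Ñ(α) = Σ_{s≥1} e^{-αs} N(s)` satisfies `Ñ(α) = e^{-α}·b(λ(1−Ñ(α)))` with `b` the LST of
the service distribution `B` having moments `μ₁, μ₂`. -/
theorem stmt_3 (B : Measure ℝ) [IsProbabilityMeasure B] (hBsupp : B (Set.Iio 0) = 0)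
    (lam μ₁ μ₂ : ℝ) (hlam : 0 < lam)
    (hμ₁int : Integrable (fun t : ℝ => t) B) (hμ₁ : μ₁ = ∫ t, t ∂B)
    (hμ₂int : Integrable (fun t : ℝ => t ^ 2) B) (hμ₂ : μ₂ = ∫ t, t ^ 2 ∂B)
    (hρ : lam * μ₁ < 1)
    (N : ℕ → ℝ) (hN0 : N 0 = 0) (hNnonneg : ∀ s, 0 ≤ N s) (hNsum : ∑' s, N s = 1)
    (hη₂sum : Summable (fun s : ℕ => (s : ℝ) ^ 2 * N s))
    (hfix : ∀ α : ℝ, 0 < α →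
      (∑' s : ℕ, Real.exp (-α * s) * N s) =
        Real.exp (-α) *
          ∫ t, Real.exp (-(lam * (1 - ∑' s : ℕ, Real.exp (-α * s) * N s)) * t) ∂B) :
    (∑' s : ℕ, (s : ℝ) ^ 2 * N s) =
      (1 / (1 - lam * μ₁)) *
        (1 + 2 * (lam * μ₁) / (1 - lam * μ₁) + lam ^ 2 * μ₂ / (1 - lam * μ₁) ^ 2) := by
  have hB : ∀ᵐ t ∂B, 0 ≤ t := by
    rw [ae_iff]
    simp only [not_le]
    exact hBsupp
  have hNsummable : Summable N := by
    by_contra h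
    simp [tsum_eq_zero_of_not_summable h] at hNsum
  have hG := tendsto_tsum_pow_mul_sub_div_sq hNnonneg hη₂sum
  have hb := tendsto_integral_exp_neg_mul_sub_div_sq B hB hμ₁int hμ₂int
  rw [hNsum] at hG
  rw [← hμ₁, ← hμ₂] at hb
  have hG1 (x : ℝ) (hx : x ∈ Ioo (0 : ℝ) 1) : ∑' s : ℕ, x ^ s * N s < 1 := by
    have h := tsum_pow_mul_le hN0 hNnonneg hNsummable hx.1.le hx.2.le
    rw [hNsum, mul_one] at h
    exact h.trans_lt hx.2
  obtain ⟨h1, h2⟩ := moment_eqs_of_takacs_eq hlam hG hb hG1 fun x hx =>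
    tsum_pow_mul_eq_mul_of_tsum_exp (F := fun g => ∫ t, Real.exp (-(lam * (1 - g)) * t) ∂B)
      hfix hx
  have hρ' : 1 - lam * μ₁ ≠ 0 := by linarith
  rw [(eq_div_iff hρ').2 h1] at h2
  field_simp at h2 ⊢
  linear_combination h2
end
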